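/- arXiv:2212.12815 — 2 statements merged into one kernel-verified Lean document; each statement's English description precedes it below -/
import Mathlib

section
/- For n ≥ 6, the positive co-degree Turán number of C5^- satisfies co^+ex(n, C5^-) = floor(n/3); that is, the maximum of δ2^+(H) over all n-vertex C5^--free non-empty 3-graphs H equals floor(n/3). -/
/-!
Lower bound: in the complete 3-partite 3-graph on the residue classes mod 3, a pair from two
different classes has the whole third class as its link, and there is no `C5⁻`, since the edges
`abc` and `bcd` put `a` and `d` in the same class, so `dea` cannot be an edge.

Upper bound: suppose every pair in an edge has more than `n / 3` common neighbours. Then the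
links of the three pairs of an edge cannot be pairwise disjoint, which produces a `K4⁻`. In a
`C5⁻`-free 3-graph, two links of pairs inside a `K4⁻` or `K4` can only meet inside it, since a
common vertex outside would close a tight path into a `C5⁻`. Counting the links of the three pairs
opposite the apex of a `K4⁻` shows that it extends to a `K4`. Counting the six pair links of that
`K4` outside its vertices then gives `6 (n / 3 - 1) ≤ n - 4`, which is false for `n ≥ 6`.
-/

open Finset

/-- The link (co-neighborhood) of the pair `{u,v}`: all `w` with `{u,v,w}` an edge. -/
def link {n : ℕ} (E : Finset (Finset (Fin n))) (u v : Fin n) : Finset (Fin n) :=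
  Finset.univ.filter (fun w => ({u, v, w} : Finset (Fin n)) ∈ E)

/-- `E` is the edge set of a 3-graph: every edge has exactly 3 vertices. -/
def isEdgeSet {n : ℕ} (E : Finset (Finset (Fin n))) : Prop := ∀ e ∈ E, e.card = 3

/-- `E` contains a copy of `C5⁻ = {abc, bcd, cde, dea}`. -/
def hasC5minus {n : ℕ} (E : Finset (Finset (Fin n))) : Prop :=
  ∃ a b c d e : Fin n,
    a ≠ b ∧ a ≠ c ∧ a ≠ d ∧ a ≠ e ∧ b ≠ c ∧ b ≠ d ∧ b ≠ e ∧ c ≠ d ∧ c ≠ e ∧ d ≠ e ∧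
    ({a, b, c} : Finset (Fin n)) ∈ E ∧ ({b, c, d} : Finset (Fin n)) ∈ E ∧
    ({c, d, e} : Finset (Fin n)) ∈ E ∧ ({d, e, a} : Finset (Fin n)) ∈ E

/-- `E` contains a copy of `C5 = {abc, bcd, cde, dea, eab}`. -/
def hasC5 {n : ℕ} (E : Finset (Finset (Fin n))) : Prop :=
  ∃ a b c d e : Fin n,
    a ≠ b ∧ a ≠ c ∧ a ≠ d ∧ a ≠ e ∧ b ≠ c ∧ b ≠ d ∧ b ≠ e ∧ c ≠ d ∧ c ≠ e ∧ d ≠ e ∧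
    ({a, b, c} : Finset (Fin n)) ∈ E ∧ ({b, c, d} : Finset (Fin n)) ∈ E ∧
    ({c, d, e} : Finset (Fin n)) ∈ E ∧ ({d, e, a} : Finset (Fin n)) ∈ E ∧
    ({e, a, b} : Finset (Fin n)) ∈ E

/-- `a, b, c, d` form a `K4` in `E`: all four triples among them are edges. -/
def isK4 {n : ℕ} (E : Finset (Finset (Fin n))) (a b c d : Fin n) : Prop :=
  a ≠ b ∧ a ≠ c ∧ a ≠ d ∧ b ≠ c ∧ b ≠ d ∧ c ≠ d ∧
  ({a, b, c} : Finset (Fin n)) ∈ E ∧ ({a, b, d} : Finset (Fin n)) ∈ E ∧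
  ({a, c, d} : Finset (Fin n)) ∈ E ∧ ({b, c, d} : Finset (Fin n)) ∈ E

/-- `E` contains a copy of `K4⁻ = {abc, abd, acd}`. -/
def hasK4minus {n : ℕ} (E : Finset (Finset (Fin n))) : Prop :=
  ∃ a b c d : Fin n, a ≠ b ∧ a ≠ c ∧ a ≠ d ∧ b ≠ c ∧ b ≠ d ∧ c ≠ d ∧
    ({a, b, c} : Finset (Fin n)) ∈ E ∧ ({a, b, d} : Finset (Fin n)) ∈ E ∧
    ({a, c, d} : Finset (Fin n)) ∈ E

/-- `A`-set of a `K4`: intersection of the three pairwise links of `{x, y, z}`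
(the set `A_w` for the fourth vertex `w` of the `K4`). -/
def Aset {n : ℕ} (E : Finset (Finset (Fin n))) (x y z : Fin n) : Finset (Fin n) :=
  link E x y ∩ link E y z ∩ link E z x

/-- `B`-set of a `K4`: `B_w = N(w,x) ∩ N(w,y) ∩ N(w,z)`. -/
def Bset {n : ℕ} (E : Finset (Finset (Fin n))) (w x y z : Fin n) : Finset (Fin n) :=
  link E w x ∩ link E w y ∩ link E w z

section Counting

variable {α : Type*} [DecidableEq α]

theorem sum_card_le_card_of_pairwise_disjoint {U : Finset α} :
    ∀ {l : List (Finset α)}, l.Pairwise Disjoint → (∀ s ∈ l, s ⊆ U) → (l.map card).sum ≤ #U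
  | [], _, _ => by simp
  | s :: l, hl, hU => by
    rw [List.pairwise_cons] at hl
    have hs := hU s List.mem_cons_self
    have ih : (l.map card).sum ≤ #(U \ s) := sum_card_le_card_of_pairwise_disjoint hl.2
      fun t ht => subset_sdiff.2 ⟨hU t (List.mem_cons_of_mem _ ht), (hl.1 t ht).symm⟩
    rw [card_sdiff_of_subset hs] at ih
    have := card_le_card hs
    simp only [List.map_cons, List.sum_cons]
    omega

theorem sum_card_sdiff_le_card_sdiff {K U : Finset α} {l : List (Finset α)}
    (hl : l.Pairwise fun s s' => s ∩ s' ⊆ K) (hU : ∀ s ∈ l, s ⊆ U) :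
    (l.map fun s => #(s \ K)).sum ≤ #(U \ K) := by
  have hmap : l.map (fun s => #(s \ K)) = (l.map (· \ K)).map card := by simp
  rw [hmap]
  refine sum_card_le_card_of_pairwise_disjoint (List.pairwise_map.2 (hl.imp fun h => ?_)) ?_
  · exact disjoint_left.2 fun w hw hw' =>
      (mem_sdiff.1 hw).2 (h (mem_inter.2 ⟨(mem_sdiff.1 hw).1, (mem_sdiff.1 hw').1⟩))
  · simp only [List.mem_map, forall_exists_index, and_imp, forall_apply_eq_imp_iff₂]
    exact fun s hs => sdiff_subset_sdiff (hU s hs) subset_rfl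

theorem card_le_card_sdiff_add_of_inter_subset {s K T : Finset α} (h : s ∩ K ⊆ T) :
    #s ≤ #(s \ K) + #T := by
  have := card_sdiff_add_card_inter s K
  have := card_le_card h
  omega

end Counting

variable {n : ℕ} {E : Finset (Finset (Fin n))} {a b c d t u v w x y z : Fin n}

section Link

theorem mem_link : w ∈ link E u v ↔ ({u, v, w} : Finset (Fin n)) ∈ E := by
  simp [link]

theorem link_comm (u v : Fin n) : link E u v = link E v u := by
  ext w
  rw [mem_link, mem_link, insert_comm]

theorem mem_link_comm : w ∈ link E u v ↔ v ∈ link E u w := by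
  rw [mem_link, mem_link, pair_comm]

theorem mem_link_rotate : w ∈ link E u v ↔ u ∈ link E v w := by
  rw [mem_link, mem_link, insert_comm u v, pair_comm u w]

theorem mem_link_of_mem (h : ({x, y, z} : Finset (Fin n)) ∈ E) :
    z ∈ link E x y ∧ y ∈ link E x z ∧ x ∈ link E y z :=
  ⟨mem_link.2 h, mem_link_comm.1 (mem_link.2 h), mem_link_rotate.1 (mem_link.2 h)⟩

theorem ne_of_card_eq_three (h3 : #({u, v, w} : Finset (Fin n)) = 3) :
    u ≠ v ∧ u ≠ w ∧ v ≠ w := by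
  refine ⟨?_, ?_, ?_⟩ <;> rintro rfl <;>
    simp only [mem_insert, mem_singleton, true_or, or_true, insert_eq_of_mem] at h3 <;>
    exact absurd h3 (card_le_two.trans_lt (by norm_num)).ne

theorem ne_of_mem_link (hE : isEdgeSet E) (h : w ∈ link E u v) : u ≠ v ∧ u ≠ w ∧ v ≠ w :=
  ne_of_card_eq_three (hE _ (mem_link.1 h))

theorem link_inter_subset_sdiff (hE : isEdgeSet E) (K : Finset (Fin n)) :
    link E x y ∩ K ⊆ K \ {x, y} := by
  intro w hw
  obtain ⟨hxy, hxw, hyw⟩ := ne_of_mem_link hE (mem_inter.1 hw).1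
  simp [(mem_inter.1 hw).2, hxw.symm, hyw.symm]

theorem card_link_le_card_sdiff_add (hE : isEdgeSet E) {K : Finset (Fin n)} (hx : x ∈ K)
    (hy : y ∈ K) (hxy : x ≠ y) : #(link E x y) ≤ #(link E x y \ K) + (#K - 2) := by
  have := card_le_card_sdiff_add_of_inter_subset (link_inter_subset_sdiff hE K (x := x) (y := y))
  rwa [card_sdiff_of_subset (s := {x, y}) (by simp [insert_subset_iff, hx, hy]),
    card_pair hxy] at this

theorem disjoint_link_of_notMem (hE : isEdgeSet E) {T : Finset (Fin n)} (hT : T ∉ E)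
    (hT3 : #T ≤ 3) (hx : x ∈ T) (hy : y ∈ T) : Disjoint (link E x y) T := by
  refine disjoint_left.2 fun w hw hwT => hT ?_
  have hsub : ({x, y, w} : Finset (Fin n)) ⊆ T := by simp [insert_subset_iff, hx, hy, hwT]
  rw [← eq_of_subset_of_card_le hsub (by rw [hE _ (mem_link.1 hw)]; exact hT3)]
  exact mem_link.1 hw

end Link

section Configurations

theorem hasK4minus_of_mem_link (hE : isEdgeSet E) (hz : z ∈ link E x y) (hw : w ∈ link E x y)
    (hw' : w ∈ link E x z) : hasK4minus E := by
  obtain ⟨hxy, hxz, hyz⟩ := ne_of_mem_link hE hz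
  obtain ⟨-, hxw, hyw⟩ := ne_of_mem_link hE hw
  obtain ⟨-, -, hzw⟩ := ne_of_mem_link hE hw'
  exact ⟨x, y, z, w, hxy, hxz, hxw, hyz, hyw, hzw, mem_link.1 hz, mem_link.1 hw, mem_link.1 hw'⟩

theorem hasC5minus_of_mem_link (hE : isEdgeSet E) {e : Fin n} (hbe : b ≠ e)
    (h₁ : c ∈ link E a b) (h₂ : d ∈ link E b c) (h₃ : e ∈ link E c d) (h₄ : a ∈ link E d e) :
    hasC5minus E := by
  obtain ⟨hab, hac, hbc⟩ := ne_of_mem_link hE h₁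
  obtain ⟨-, hbd, hcd⟩ := ne_of_mem_link hE h₂
  obtain ⟨-, hce, hde⟩ := ne_of_mem_link hE h₃
  obtain ⟨-, hda, hea⟩ := ne_of_mem_link hE h₄
  exact ⟨a, b, c, d, e, hab, hac, hda.symm, hea.symm, hbc, hbd, hbe, hcd, hce, hde,
    mem_link.1 h₁, mem_link.1 h₂, mem_link.1 h₃, mem_link.1 h₄⟩

variable (hE : isEdgeSet E) (h5 : ¬ hasC5minus E)
include hE h5

-- A common neighbour `w ≠ t` would make `y w x z t` a `C5⁻`.
theorem link_inter_link_subset (hxz : t ∈ link E x z) (hyz : t ∈ link E y z) :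
    link E x y ∩ link E x z ⊆ {t} := by
  intro w hw
  rw [mem_inter] at hw
  by_contra hwt
  exact h5 (hasC5minus_of_mem_link hE (mem_singleton.not.1 hwt) (mem_link_rotate.1 hw.1)
    (mem_link_rotate.1 (mem_link_rotate.1 hw.2)) hxz (mem_link_rotate.1 hyz))

-- A common neighbour `w` would make `w x y z t` a `C5⁻`.
theorem disjoint_link_link (hx : x ∈ link E y z) (ht : t ∈ link E y z) (hxt : x ≠ t) :
    Disjoint (link E x y) (link E z t) :=
  disjoint_left.2 fun _ hw hw' => h5 (hasC5minus_of_mem_link hE hxt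
    (mem_link_rotate.1 (mem_link_rotate.1 hw)) (mem_link_rotate.2 hx) ht hw')

theorem pairwise_link_inter_link_subset (hxy : t ∈ link E x y) (hxz : t ∈ link E x z)
    (hyz : t ∈ link E y z) :
    [link E x y, link E x z, link E y z].Pairwise fun s s' => s ∩ s' ⊆ {t} := by
  have hxx := link_inter_link_subset hE h5 hxz hyz
  have hyx := link_inter_link_subset hE h5 hyz hxz
  rw [link_comm y z] at hyz
  have hzx := link_inter_link_subset hE h5 hyz hxy
  rw [link_comm y x] at hyx
  rw [link_comm z x, link_comm z y] at hzx
  simp only [List.pairwise_cons, List.mem_cons, List.not_mem_nil, forall_eq_or_imp]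
  exact ⟨⟨hxx, hyx, by simp⟩, ⟨hzx, by simp⟩, by simp, List.Pairwise.nil⟩

theorem pairwise_link_inter_subset_of_isK4 (hK : isK4 E a b c d) :
    [link E a b, link E a c, link E a d, link E b c, link E b d, link E c d].Pairwise
      fun s s' => s ∩ s' ⊆ {a, b, c, d} := by
  obtain ⟨-, hac, had, -, -, -, habc, habd, hacd, hbcd⟩ := hK
  obtain ⟨hc_ab, hb_ac, ha_bc⟩ := mem_link_of_mem habc
  obtain ⟨hd_ab, hb_ad, ha_bd⟩ := mem_link_of_mem habd
  obtain ⟨hd_ac, hc_ad, ha_cd⟩ := mem_link_of_mem hacd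
  obtain ⟨hd_bc, hc_bd, hb_cd⟩ := mem_link_of_mem hbcd
  set K : Finset (Fin n) := {a, b, c, d}
  have h₁ := (pairwise_link_inter_link_subset hE h5 hd_ab hd_ac hd_bc).imp
    (·.trans (show {d} ⊆ K by simp [K]))
  have h₂ := (pairwise_link_inter_link_subset hE h5 hc_ab hc_ad hc_bd).imp
    (·.trans (show {c} ⊆ K by simp [K]))
  have h₃ := (pairwise_link_inter_link_subset hE h5 hb_ac hb_ad hb_cd).imp
    (·.trans (show {b} ⊆ K by simp [K]))
  have h₄ := (pairwise_link_inter_link_subset hE h5 ha_bc ha_bd ha_cd).imp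
    (·.trans (show {a} ⊆ K by simp [K]))
  have h₅ : link E a b ∩ link E c d ⊆ K :=
    (disjoint_iff_inter_eq_empty.1 (disjoint_link_link hE h5 ha_bc hd_bc had)).subset.trans
      (empty_subset K)
  have h₆ : link E a c ∩ link E b d ⊆ K :=
    (disjoint_iff_inter_eq_empty.1 (disjoint_link_link hE h5 (x := a) (y := c) (z := b)
      (by rwa [link_comm]) (by rwa [link_comm]) had)).subset.trans (empty_subset K)
  have h₇ : link E a d ∩ link E b c ⊆ K :=
    (disjoint_iff_inter_eq_empty.1 (disjoint_link_link hE h5 (x := a) (y := d) (z := b)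
      (by rwa [link_comm]) (by rwa [link_comm]) hac)).subset.trans (empty_subset K)
  simp only [List.pairwise_cons, List.mem_cons, List.not_mem_nil, forall_eq_or_imp,
    false_imp_iff, implies_true, and_true, List.Pairwise.nil] at h₁ h₂ h₃ h₄ ⊢
  exact ⟨⟨h₁.1.1, h₂.1.1, h₁.1.2, h₂.1.2, h₅⟩, ⟨h₃.1.1, h₁.2, h₆, h₃.1.2⟩, ⟨h₇, h₂.2, h₃.2⟩, h₄⟩

end Configurations

/-- `δ₂⁺(E) ≥ k`. -/
def MinPosCodegreeGE (E : Finset (Finset (Fin n))) (k : ℕ) : Prop :=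
  ∀ u v : Fin n, (link E u v).Nonempty → k ≤ #(link E u v)

theorem MinPosCodegreeGE.le_card {k : ℕ} (hδ : MinPosCodegreeGE E k) (hw : w ∈ link E u v) :
    k ≤ #(link E u v) :=
  hδ u v ⟨w, hw⟩

section UpperBound

variable (hE : isEdgeSet E) (hδ : MinPosCodegreeGE E (n / 3 + 1))
include hE hδ

theorem hasK4minus_of_minPosCodegreeGE (hne : E.Nonempty) : hasK4minus E := by
  by_contra hK
  obtain ⟨e, he⟩ := hne
  obtain ⟨x, y, z, -, -, -, rfl⟩ := card_eq_three.1 (hE e he)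
  obtain ⟨hz, hy, hx⟩ := mem_link_of_mem he
  have hdisj : ∀ {x y z : Fin n}, z ∈ link E x y → Disjoint (link E x y) (link E x z) :=
    fun hz => disjoint_left.2 fun _ hw hw' => hK (hasK4minus_of_mem_link hE hz hw hw')
  have hxy_yz := hdisj (mem_link_comm.1 hx)
  have hxz_yz := hdisj (mem_link_rotate.1 hx)
  rw [link_comm y x] at hxy_yz
  rw [link_comm z x, link_comm z y] at hxz_yz
  have hsum := sum_card_le_card_of_pairwise_disjoint (U := univ)
    (l := [link E x y, link E x z, link E y z]) (by simp [hdisj hz, hxy_yz, hxz_yz]) (by simp)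
  simp only [List.map_cons, List.map_nil, List.sum_cons, List.sum_nil, card_univ,
    Fintype.card_fin] at hsum
  have := hδ.le_card hz
  have := hδ.le_card hy
  have := hδ.le_card hx
  omega

variable (h5 : ¬ hasC5minus E)
include h5

theorem mem_of_K4minus (habc : ({a, b, c} : Finset (Fin n)) ∈ E)
    (habd : ({a, b, d} : Finset (Fin n)) ∈ E) (hacd : ({a, c, d} : Finset (Fin n)) ∈ E) :
    ({b, c, d} : Finset (Fin n)) ∈ E := by
  by_contra hbcd
  obtain ⟨-, -, hbc⟩ := mem_link_of_mem habc
  obtain ⟨-, -, hbd⟩ := mem_link_of_mem habd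
  obtain ⟨-, -, hcd⟩ := mem_link_of_mem hacd
  obtain ⟨hb_c, hb_a, hc_a⟩ := ne_of_mem_link hE hbc
  obtain ⟨hb_d, -, hd_a⟩ := ne_of_mem_link hE hbd
  obtain ⟨hc_d, -, -⟩ := ne_of_mem_link hE hcd
  have hsum := sum_card_sdiff_le_card_sdiff (U := {b, c, d}ᶜ)
    (pairwise_link_inter_link_subset hE h5 hbc hbd hcd) fun s hs => by
      simp only [List.mem_cons, List.not_mem_nil, or_false] at hs
      rw [subset_compl_iff_disjoint_right]
      rcases hs with rfl | rfl | rfl <;>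
        exact disjoint_link_of_notMem hE hbcd card_le_three (by simp) (by simp)
  have hcard : #({a, b, c, d} : Finset (Fin n)) = 4 := by
    simp [card_insert_of_notMem, hb_a.symm, hc_a.symm, hd_a.symm, hb_c, hb_d, hc_d]
  rw [sdiff_singleton_eq_erase, ← compl_insert, card_compl, Fintype.card_fin, hcard] at hsum
  simp only [List.map_cons, List.map_nil, List.sum_cons, List.sum_nil] at hsum
  have hlow : ∀ {x y : Fin n}, a ∈ link E x y → n / 3 ≤ #(link E x y \ {a}) := fun {x y} h => by
    have := hδ.le_card h
    have := card_le_card_sdiff_add_card (s := link E x y) (t := {a})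
    rw [card_singleton] at this
    omega
  have := hlow hbc
  have := hlow hbd
  have := hlow hcd
  omega

theorem not_isK4 (hn : 6 ≤ n) (hK : isK4 E a b c d) : False := by
  have hpair := pairwise_link_inter_subset_of_isK4 hE h5 hK
  obtain ⟨hab, hac, had, hbc, hbd, hcd, habc, habd, hacd, -⟩ := hK
  obtain ⟨hc_ab, hb_ac, ha_bc⟩ := mem_link_of_mem habc
  obtain ⟨-, hb_ad, ha_bd⟩ := mem_link_of_mem habd
  obtain ⟨-, -, ha_cd⟩ := mem_link_of_mem hacd
  set K : Finset (Fin n) := {a, b, c, d}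
  have hK4 : #K = 4 := by simp [K, card_insert_of_notMem, hab, hac, had, hbc, hbd, hcd]
  have hsum := sum_card_sdiff_le_card_sdiff (U := univ) hpair (by simp)
  rw [← compl_eq_univ_sdiff, card_compl, Fintype.card_fin, hK4] at hsum
  simp only [List.map_cons, List.map_nil, List.sum_cons, List.sum_nil] at hsum
  -- each pair-link has more than `n / 3` elements, at most two of which lie in `K`
  have hlow : ∀ {x y w}, x ∈ K → y ∈ K → x ≠ y → w ∈ link E x y →
      n / 3 - 1 ≤ #(link E x y \ K) := fun hx hy hxy hw => by
    have := hδ.le_card hw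
    have := card_link_le_card_sdiff_add hE hx hy hxy
    omega
  have := hlow (by simp [K]) (by simp [K]) hab hc_ab
  have := hlow (by simp [K]) (by simp [K]) hac hb_ac
  have := hlow (by simp [K]) (by simp [K]) had hb_ad
  have := hlow (by simp [K]) (by simp [K]) hbc ha_bc
  have := hlow (by simp [K]) (by simp [K]) hbd ha_bd
  have := hlow (by simp [K]) (by simp [K]) hcd ha_cd
  omega

end UpperBound

theorem not_minPosCodegreeGE_div_three_add_one (hn : 6 ≤ n) (hE : isEdgeSet E)
    (hne : E.Nonempty) (h5 : ¬ hasC5minus E) : ¬ MinPosCodegreeGE E (n / 3 + 1) := fun hδ => by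
  obtain ⟨a, b, c, d, hab, hac, had, hbc, hbd, hcd, habc, habd, hacd⟩ :=
    hasK4minus_of_minPosCodegreeGE hE hδ hne
  exact not_isK4 hE hδ h5 hn
    ⟨hab, hac, had, hbc, hbd, hcd, habc, habd, hacd, mem_of_K4minus hE hδ h5 habc habd hacd⟩

section Construction

theorem le_card_filter_mod {r j : ℕ} (hj : j < r) : n / r ≤ #{w : Fin n | (w : ℕ) % r = j} := by
  have hr : r ≠ 0 := by omega
  have hlt (i : Fin (n / r)) : r * i + j < n :=
    calc r * i + j < r * (i + 1) := by rw [mul_add, mul_one]; omega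
      _ ≤ r * (n / r) := Nat.mul_le_mul_left r i.2
      _ ≤ n := Nat.mul_div_le n r
  calc n / r = #(univ : Finset (Fin (n / r))) := by rw [card_univ, Fintype.card_fin]
    _ ≤ _ := card_le_card_of_injOn (fun i => ⟨r * i + j, hlt i⟩)
      (fun i _ => by simp [Nat.mod_eq_of_lt hj])
      (fun i _ i' _ h => by simpa [Fin.ext_iff, hr] using h)

def residueTripartite (n : ℕ) : Finset (Finset (Fin n)) :=
  {s | #s = 3 ∧ (s : Set (Fin n)).Pairwise fun u v => (u : ℕ) % 3 ≠ v % 3}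

theorem mem_residueTripartite :
    ({u, v, w} : Finset (Fin n)) ∈ residueTripartite n ↔
      (u : ℕ) % 3 ≠ v % 3 ∧ (u : ℕ) % 3 ≠ w % 3 ∧ (v : ℕ) % 3 ≠ w % 3 := by
  simp only [residueTripartite, ne_eq, mem_filter, mem_univ, coe_insert, coe_singleton,
    Set.pairwise_insert, Set.pairwise_singleton, Set.mem_singleton_iff, forall_eq, true_and,
    Set.mem_insert_iff, forall_eq_or_imp]
  constructor
  · rintro ⟨h3, hvw, huv, huw⟩
    obtain ⟨hne₁, hne₂, hne₃⟩ := ne_of_card_eq_three h3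
    exact ⟨(huv hne₁).1, (huw hne₂).1, (hvw hne₃).1⟩
  · rintro ⟨h₁, h₂, h₃⟩
    have hne (x y : Fin n) (h : ¬(x : ℕ) % 3 = y % 3) : x ≠ y := fun hxy => h (hxy ▸ rfl)
    exact ⟨card_eq_three.2 ⟨u, v, w, hne _ _ h₁, hne _ _ h₂, hne _ _ h₃, rfl⟩,
      fun _ => ⟨h₃, Ne.symm h₃⟩, fun _ => ⟨h₁, Ne.symm h₁⟩, fun _ => ⟨h₂, Ne.symm h₂⟩⟩

theorem isEdgeSet_residueTripartite : isEdgeSet (residueTripartite n) :=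
  fun _ hs => (mem_filter.1 hs).2.1

theorem residueTripartite_nonempty (hn : 3 ≤ n) : (residueTripartite n).Nonempty :=
  ⟨{⟨0, by omega⟩, ⟨1, by omega⟩, ⟨2, by omega⟩}, mem_residueTripartite.2 (by simp)⟩

theorem not_hasC5minus_residueTripartite : ¬ hasC5minus (residueTripartite n) := by
  rintro ⟨a, b, c, d, e, -, -, -, -, -, -, -, -, -, -, habc, hbcd, -, hdea⟩
  rw [mem_residueTripartite] at habc hbcd hdea
  omega

theorem minPosCodegreeGE_residueTripartite : MinPosCodegreeGE (residueTripartite n) (n / 3) := by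
  rintro u v ⟨w, hw⟩
  rw [mem_link, mem_residueTripartite] at hw
  refine (le_card_filter_mod (r := 3) (j := 3 - u % 3 - v % 3) (by omega)).trans
    (card_le_card fun x hx => ?_)
  rw [mem_filter] at hx
  rw [mem_link, mem_residueTripartite]
  omega

end Construction

/-- for `n ≥ 6`, `co⁺ex(n, C5⁻) = ⌊n/3⌋`: the maximum of the minimum
positive co-degree over all `n`-vertex `C5⁻`-free non-empty 3-graphs is `⌊n/3⌋`. -/
theorem stmt_2 (n : ℕ) (hn : 6 ≤ n) :
    (∃ E : Finset (Finset (Fin n)), isEdgeSet E ∧ E.Nonempty ∧ ¬ hasC5minus E ∧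
      ∀ u v : Fin n, (link E u v).Nonempty → n / 3 ≤ (link E u v).card) ∧
    (∀ E : Finset (Finset (Fin n)), isEdgeSet E → E.Nonempty → ¬ hasC5minus E →
      ∃ u v : Fin n, (link E u v).Nonempty ∧ (link E u v).card ≤ n / 3) := by
  refine ⟨⟨residueTripartite n, isEdgeSet_residueTripartite, residueTripartite_nonempty (by omega),
    not_hasC5minus_residueTripartite, minPosCodegreeGE_residueTripartite⟩, fun E hE hne h5 => ?_⟩
  by_contra! h
  exact not_minPosCodegreeGE_div_three_add_one hn hE hne h5 h
end

section
/- Let H be an n-vertex 3-graph with minimum positive co-degree δ2^+(H) ≥ n/2. If H contains no copy of K4 (four vertices spanning all four triples as edges) and H contains a copy of K4^- (three edges abc, abd, acd on four vertices), then H contains a copy of C5 = {abc, bcd, cde, dea, eab}. -/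
open Finset

lemma mem_link_iff {n : ℕ} {E : Finset (Finset (Fin n))} {u v w : Fin n} :
    w ∈ link E u v ↔ ({u, v, w} : Finset (Fin n)) ∈ E := by
  simp [link]

lemma edge_perm {n : ℕ} {E : Finset (Finset (Fin n))} {x y z p q r : Fin n}
    (h : ({x, y, z} : Finset (Fin n)) ∈ E)
    (hiff : ∀ t : Fin n, (t = p ∨ t = q ∨ t = r) ↔ (t = x ∨ t = y ∨ t = z)) :
    ({p, q, r} : Finset (Fin n)) ∈ E := by
  have he : ({p, q, r} : Finset (Fin n)) = {x, y, z} := by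
    ext t
    simp only [Finset.mem_insert, Finset.mem_singleton]
    exact hiff t
  rwa [he]

lemma link_ne {n : ℕ} {E : Finset (Finset (Fin n))} (hE : isEdgeSet E) {u v w : Fin n}
    (h : w ∈ link E u v) : w ≠ u ∧ w ≠ v := by
  have hm : ({u, v, w} : Finset (Fin n)) ∈ E := mem_link_iff.1 h
  have h3 := hE _ hm
  constructor
  · rintro rfl
    have he : ({w, v, w} : Finset (Fin n)) = {v, w} := by
      ext t; simp only [Finset.mem_insert, Finset.mem_singleton]; tauto
    rw [he] at h3
    have := Finset.card_insert_le v ({w} : Finset (Fin n))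
    simp at this
    omega
  · rintro rfl
    have he : ({u, w, w} : Finset (Fin n)) = {u, w} := by
      ext t; simp only [Finset.mem_insert, Finset.mem_singleton]; tauto
    rw [he] at h3
    have := Finset.card_insert_le u ({w} : Finset (Fin n))
    simp at this
    omega

lemma card_sum {n : ℕ} (X : Finset (Fin n)) :
    X.card = ∑ v : Fin n, (if v ∈ X then 1 else 0) := by
  rw [← Finset.card_filter]
  congr 1
  rw [Finset.filter_mem_eq_inter, Finset.univ_inter]

set_option maxHeartbeats 2000000

/-- if an `n`-vertex 3-graph has minimum positive co-degree ≥ `n/2`,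
is `K4`-free and contains a `K4⁻`, then it contains a `C5`. -/
theorem stmt_4 (n : ℕ) (E : Finset (Finset (Fin n))) (hE : isEdgeSet E)
    (hdeg : ∀ u v : Fin n, (link E u v).Nonempty → n ≤ 2 * (link E u v).card)
    (hK4free : ∀ a b c d : Fin n, ¬ isK4 E a b c d)
    (hK4m : hasK4minus E) :
    hasC5 E := by
  classical
  obtain ⟨a, b, c, d, hab, hac, had, hbc, hbd, hcd, e1, e2, e3⟩ := hK4m
  by_contra hc
  -- bcd is not an edge
  have hbcd : ({b, c, d} : Finset (Fin n)) ∉ E := fun h =>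
    hK4free a b c d ⟨hab, hac, had, hbc, hbd, hcd, e1, e2, e3, h⟩
  -- The nine forbidden triple intersections
  have Fa : ∀ v : Fin n, ¬ (v ∈ link E a b ∧ v ∈ link E a c ∧ v ∈ link E b c) := by
    rintro v ⟨h1, h2, h4⟩
    obtain ⟨hva, hvb⟩ := link_ne hE h1
    obtain ⟨-, hvc⟩ := link_ne hE h2
    exact hK4free a b c v ⟨hab, hac, Ne.symm hva, hbc, Ne.symm hvb, Ne.symm hvc,
      e1, mem_link_iff.1 h1, mem_link_iff.1 h2, mem_link_iff.1 h4⟩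
  have Fb : ∀ v : Fin n, ¬ (v ∈ link E a b ∧ v ∈ link E a d ∧ v ∈ link E b d) := by
    rintro v ⟨h1, h3, h5⟩
    obtain ⟨hva, hvb⟩ := link_ne hE h1
    obtain ⟨-, hvd⟩ := link_ne hE h3
    exact hK4free a b d v ⟨hab, had, Ne.symm hva, hbd, Ne.symm hvb, Ne.symm hvd,
      e2, mem_link_iff.1 h1, mem_link_iff.1 h3, mem_link_iff.1 h5⟩
  have Fc : ∀ v : Fin n, ¬ (v ∈ link E a c ∧ v ∈ link E a d ∧ v ∈ link E c d) := by
    rintro v ⟨h2, h3, h6⟩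
    obtain ⟨hva, hvc⟩ := link_ne hE h2
    obtain ⟨-, hvd⟩ := link_ne hE h3
    exact hK4free a c d v ⟨hac, had, Ne.symm hva, hcd, Ne.symm hvc, Ne.symm hvd,
      e3, mem_link_iff.1 h2, mem_link_iff.1 h3, mem_link_iff.1 h6⟩
  have Fd : ∀ v : Fin n, ¬ (v ∈ link E a b ∧ v ∈ link E b c ∧ v ∈ link E c d) := by
    rintro v ⟨h1, h4, h6⟩
    obtain ⟨hva, hvb⟩ := link_ne hE h1
    obtain ⟨-, hvc⟩ := link_ne hE h4
    obtain ⟨-, hvd⟩ := link_ne hE h6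
    -- C5 : (d, a, b, v, c)
    exact hc ⟨d, a, b, v, c, Ne.symm had, Ne.symm hbd, Ne.symm hvd, Ne.symm hcd,
      hab, Ne.symm hva, hac, Ne.symm hvb, hbc, hvc,
      edge_perm e2 (fun t => by tauto),
      mem_link_iff.1 h1,
      edge_perm (mem_link_iff.1 h4) (fun t => by tauto),
      edge_perm (mem_link_iff.1 h6) (fun t => by tauto),
      edge_perm e3 (fun t => by tauto)⟩
  have Fe : ∀ v : Fin n, ¬ (v ∈ link E a b ∧ v ∈ link E b d ∧ v ∈ link E c d) := by
    rintro v ⟨h1, h5, h6⟩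
    obtain ⟨hva, hvb⟩ := link_ne hE h1
    obtain ⟨hvc, hvd⟩ := link_ne hE h6
    -- C5 : (c, a, b, v, d)
    exact hc ⟨c, a, b, v, d, Ne.symm hac, Ne.symm hbc, Ne.symm hvc, hcd,
      hab, Ne.symm hva, had, Ne.symm hvb, hbd, hvd,
      edge_perm e1 (fun t => by tauto),
      mem_link_iff.1 h1,
      edge_perm (mem_link_iff.1 h5) (fun t => by tauto),
      edge_perm (mem_link_iff.1 h6) (fun t => by tauto),
      edge_perm e3 (fun t => by tauto)⟩
  have Ff : ∀ v : Fin n, ¬ (v ∈ link E a c ∧ v ∈ link E b c ∧ v ∈ link E b d) := by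
    rintro v ⟨h2, h4, h5⟩
    obtain ⟨hva, hvc⟩ := link_ne hE h2
    obtain ⟨hvb, hvd⟩ := link_ne hE h5
    -- C5 : (a, d, b, v, c)
    exact hc ⟨a, d, b, v, c, had, hab, Ne.symm hva, hac,
      Ne.symm hbd, Ne.symm hvd, Ne.symm hcd, Ne.symm hvb, hbc, hvc,
      edge_perm e2 (fun t => by tauto),
      edge_perm (mem_link_iff.1 h5) (fun t => by tauto),
      edge_perm (mem_link_iff.1 h4) (fun t => by tauto),
      edge_perm (mem_link_iff.1 h2) (fun t => by tauto),
      edge_perm e3 (fun t => by tauto)⟩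
  have Fg : ∀ v : Fin n, ¬ (v ∈ link E a d ∧ v ∈ link E b c ∧ v ∈ link E b d) := by
    rintro v ⟨h3, h4, h5⟩
    obtain ⟨hva, hvd⟩ := link_ne hE h3
    obtain ⟨hvb, hvc⟩ := link_ne hE h4
    -- C5 : (a, c, b, v, d)
    exact hc ⟨a, c, b, v, d, hac, hab, Ne.symm hva, had,
      Ne.symm hbc, Ne.symm hvc, hcd, Ne.symm hvb, hbd, hvd,
      edge_perm e1 (fun t => by tauto),
      edge_perm (mem_link_iff.1 h4) (fun t => by tauto),
      edge_perm (mem_link_iff.1 h5) (fun t => by tauto),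
      edge_perm (mem_link_iff.1 h3) (fun t => by tauto),
      edge_perm e3 (fun t => by tauto)⟩
  have Fh : ∀ v : Fin n, ¬ (v ∈ link E a c ∧ v ∈ link E b d ∧ v ∈ link E c d) := by
    rintro v ⟨h2, h5, h6⟩
    obtain ⟨hva, hvc⟩ := link_ne hE h2
    obtain ⟨hvb, hvd⟩ := link_ne hE h5
    -- C5 : (b, a, c, v, d)
    exact hc ⟨b, a, c, v, d, Ne.symm hab, hbc, Ne.symm hvb, hbd,
      hac, Ne.symm hva, had, Ne.symm hvc, hcd, hvd,
      edge_perm e1 (fun t => by tauto),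
      mem_link_iff.1 h2,
      edge_perm (mem_link_iff.1 h6) (fun t => by tauto),
      edge_perm (mem_link_iff.1 h5) (fun t => by tauto),
      edge_perm e2 (fun t => by tauto)⟩
  have Fi : ∀ v : Fin n, ¬ (v ∈ link E a d ∧ v ∈ link E b c ∧ v ∈ link E c d) := by
    rintro v ⟨h3, h4, h6⟩
    obtain ⟨hva, hvd⟩ := link_ne hE h3
    obtain ⟨hvb, hvc⟩ := link_ne hE h4
    -- C5 : (b, a, d, v, c)
    exact hc ⟨b, a, d, v, c, Ne.symm hab, hbd, Ne.symm hvb, hbc,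
      had, Ne.symm hva, hac, Ne.symm hvd, Ne.symm hcd, hvc,
      edge_perm e2 (fun t => by tauto),
      mem_link_iff.1 h3,
      edge_perm (mem_link_iff.1 h6) (fun t => by tauto),
      edge_perm (mem_link_iff.1 h4) (fun t => by tauto),
      edge_perm e1 (fun t => by tauto)⟩
  -- the counting
  set g : Fin n → ℕ := fun v =>
    (if v ∈ link E a b then 1 else 0) + (if v ∈ link E a c then 1 else 0) +
    (if v ∈ link E a d then 1 else 0) + (if v ∈ link E b c then 1 else 0) +
    (if v ∈ link E b d then 1 else 0) + (if v ∈ link E c d then 1 else 0) with hg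
  have tri : ∀ (p q r : Prop) [Decidable p] [Decidable q] [Decidable r],
      ¬(p ∧ q ∧ r) → (if p then 1 else 0) + (if q then 1 else 0) + (if r then 1 else 0) ≤ 2 := by
    intro p q r _ _ _ h
    by_cases hp : p <;> by_cases hq : q <;> by_cases hr : r <;>
      simp [hp, hq, hr] <;> exact absurd ⟨hp, hq, hr⟩ h
  have unit : ∀ (p : Prop) [Decidable p], (if p then 1 else 0) ≤ 1 := by
    intro p _; split <;> omega
  have hg3 : ∀ v : Fin n, g v ≤ 3 := by
    intro v
    have A1 := tri _ _ _ (Fa v); have A2 := tri _ _ _ (Fb v)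
    have A3 := tri _ _ _ (Fc v); have A4 := tri _ _ _ (Fd v)
    have A5 := tri _ _ _ (Fe v); have A6 := tri _ _ _ (Ff v)
    have A7 := tri _ _ _ (Fg v); have A8 := tri _ _ _ (Fh v)
    have A9 := tri _ _ _ (Fi v)
    have B1 := unit (v ∈ link E a b); have B2 := unit (v ∈ link E a c)
    have B3 := unit (v ∈ link E a d); have B4 := unit (v ∈ link E b c)
    have B5 := unit (v ∈ link E b d); have B6 := unit (v ∈ link E c d)
    simp only [hg]
    omega
  have hgb : g b ≤ 2 := by
    have n1 : b ∉ link E a b := fun h => (link_ne hE h).2 rfl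
    have n4 : b ∉ link E b c := fun h => (link_ne hE h).1 rfl
    have n5 : b ∉ link E b d := fun h => (link_ne hE h).1 rfl
    have n6 : b ∉ link E c d := fun h =>
      hbcd (edge_perm (mem_link_iff.1 h) (fun t => by tauto))
    have z1 : (if b ∈ link E a b then 1 else 0) = 0 := if_neg n1
    have z4 : (if b ∈ link E b c then 1 else 0) = 0 := if_neg n4
    have z5 : (if b ∈ link E b d then 1 else 0) = 0 := if_neg n5
    have z6 : (if b ∈ link E c d then 1 else 0) = 0 := if_neg n6
    have B2 := unit (b ∈ link E a c); have B3 := unit (b ∈ link E a d)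
    simp only [hg]
    omega
  have hgc : g c ≤ 2 := by
    have n2 : c ∉ link E a c := fun h => (link_ne hE h).2 rfl
    have n4 : c ∉ link E b c := fun h => (link_ne hE h).2 rfl
    have n5 : c ∉ link E b d := fun h =>
      hbcd (edge_perm (mem_link_iff.1 h) (fun t => by tauto))
    have n6 : c ∉ link E c d := fun h => (link_ne hE h).1 rfl
    have z2 : (if c ∈ link E a c then 1 else 0) = 0 := if_neg n2
    have z4 : (if c ∈ link E b c then 1 else 0) = 0 := if_neg n4
    have z5 : (if c ∈ link E b d then 1 else 0) = 0 := if_neg n5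
    have z6 : (if c ∈ link E c d then 1 else 0) = 0 := if_neg n6
    have B1 := unit (c ∈ link E a b); have B3 := unit (c ∈ link E a d)
    simp only [hg]
    omega
  have hgd : g d ≤ 2 := by
    have n3 : d ∉ link E a d := fun h => (link_ne hE h).2 rfl
    have n4 : d ∉ link E b c := fun h => hbcd (mem_link_iff.1 h)
    have n5 : d ∉ link E b d := fun h => (link_ne hE h).2 rfl
    have n6 : d ∉ link E c d := fun h => (link_ne hE h).2 rfl
    have z3 : (if d ∈ link E a d then 1 else 0) = 0 := if_neg n3
    have z4 : (if d ∈ link E b c then 1 else 0) = 0 := if_neg n4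
    have z5 : (if d ∈ link E b d then 1 else 0) = 0 := if_neg n5
    have z6 : (if d ∈ link E c d then 1 else 0) = 0 := if_neg n6
    have B1 := unit (d ∈ link E a b); have B2 := unit (d ∈ link E a c)
    simp only [hg]
    omega
  -- sum of cards equals sum of g
  have cardsum : (link E a b).card + (link E a c).card + (link E a d).card +
      (link E b c).card + (link E b d).card + (link E c d).card = ∑ v : Fin n, g v := by
    rw [card_sum (link E a b), card_sum (link E a c), card_sum (link E a d),
      card_sum (link E b c), card_sum (link E b d), card_sum (link E c d),
      ← Finset.sum_add_distrib, ← Finset.sum_add_distrib, ← Finset.sum_add_distrib,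
      ← Finset.sum_add_distrib, ← Finset.sum_add_distrib]
  -- split the sum
  have hsub : ({b, c, d} : Finset (Fin n)) ⊆ Finset.univ := Finset.subset_univ _
  have hsplit := Finset.sum_sdiff (f := g) hsub
  have hnotmem1 : b ∉ ({c, d} : Finset (Fin n)) := by simp [hbc, hbd]
  have hnotmem2 : c ∉ ({d} : Finset (Fin n)) := by simp [hcd]
  have hsum_bcd : ∑ v ∈ ({b, c, d} : Finset (Fin n)), g v ≤ 6 := by
    rw [Finset.sum_insert hnotmem1, Finset.sum_insert hnotmem2, Finset.sum_singleton]
    omega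
  have hsum_rest : ∑ v ∈ Finset.univ \ ({b, c, d} : Finset (Fin n)), g v ≤
      3 * (Finset.univ \ ({b, c, d} : Finset (Fin n))).card := by
    calc ∑ v ∈ Finset.univ \ ({b, c, d} : Finset (Fin n)), g v
        ≤ ∑ _v ∈ Finset.univ \ ({b, c, d} : Finset (Fin n)), 3 :=
          Finset.sum_le_sum (fun v _ => hg3 v)
      _ = 3 * (Finset.univ \ ({b, c, d} : Finset (Fin n))).card := by
          rw [Finset.sum_const, smul_eq_mul, mul_comm]
  have h3card : ({b, c, d} : Finset (Fin n)).card = 3 := by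
    rw [Finset.card_insert_of_notMem hnotmem1, Finset.card_insert_of_notMem hnotmem2,
      Finset.card_singleton]
  have hcards : (Finset.univ \ ({b, c, d} : Finset (Fin n))).card + 3 = n := by
    have h := Finset.card_sdiff_add_card_eq_card hsub
    rw [h3card] at h
    simpa using h
  -- lower bounds on link sizes
  have l1 := hdeg a b ⟨c, mem_link_iff.2 e1⟩
  have l2 := hdeg a c ⟨d, mem_link_iff.2 e3⟩
  have l3 := hdeg a d ⟨c, mem_link_iff.2 (edge_perm e3 (fun t => by tauto))⟩
  have l4 := hdeg b c ⟨a, mem_link_iff.2 (edge_perm e1 (fun t => by tauto))⟩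
  have l5 := hdeg b d ⟨a, mem_link_iff.2 (edge_perm e2 (fun t => by tauto))⟩
  have l6 := hdeg c d ⟨a, mem_link_iff.2 (edge_perm e3 (fun t => by tauto))⟩
  omega
end
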